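/- Let (X,Y) be a nondegenerate bivariate Gaussian with correlation coefficient ρ > 0 and arbitrary means. Then the sign-binarized variables U = sgn(X), V = sgn(Y) satisfy Cov(U,V) > 0; equivalently P(X>0, Y>0) > P(X>0)·P(Y>0). -/

import Mathlib

/-! The density factors as the `N(μX, σX²)` density of `X` times the `N(m(x), σY²(1 - ρ²))`
density of `Y` given `X = x`, where `m(x) = μY + ρ σY (x - μX) / σX`. For `ρ > 0` the conditional
probability `G(x) = P(Y > 0 | X = x)` is strictly increasing in `x`, so `1{X > 0}` and `G(X)` are
increasing functions of the same variable and are positively correlated (Chebyshev's association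
inequality); their covariance is `P(X > 0, Y > 0) - P(X > 0) P(Y > 0)`. Off the null set where `X`
or `Y` vanishes, `sgn = 2 · 1{· > 0} - 1`, so `Cov(sgn X, sgn Y)` is four times that quantity. -/

open MeasureTheory

/-- Density of a nondegenerate bivariate Gaussian with means `μX, μY`, standard
deviations `σX, σY > 0` and correlation `ρ`, `|ρ| < 1`. -/
noncomputable def gauss2 (μX μY σX σY ρ x y : ℝ) : ℝ :=
  (2 * Real.pi * σX * σY * Real.sqrt (1 - ρ^2))⁻¹ *
    Real.exp (-(((x - μX)/σX)^2 - 2*ρ*((x - μX)/σX)*((y - μY)/σY)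
        + ((y - μY)/σY)^2) / (2*(1 - ρ^2)))

open Real Set ProbabilityTheory
open scoped NNReal

lemma setIntegral_pos_of_forall_pos {X : Type*} [MeasurableSpace X] {μ : Measure X}
    {f : X → ℝ} {s : Set X} (hs : MeasurableSet s) (hμs : μ s ≠ 0) (hf : IntegrableOn f s μ)
    (hpos : ∀ x ∈ s, 0 < f x) : 0 < ∫ x in s, f x ∂μ := by
  rw [setIntegral_pos_iff_support_of_nonneg_ae
    (ae_restrict_of_forall_mem hs fun x hx => (hpos x hx).le) hf,
    inter_eq_right.2 (show s ⊆ Function.support f from fun x hx => (hpos x hx).ne')]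
  exact pos_iff_ne_zero.2 hμs

lemma strictAnti_setIntegral_Ioi {f : ℝ → ℝ} (hf : Integrable f) (hpos : ∀ x, 0 < f x) :
    StrictAnti fun a => ∫ x in Ioi a, f x := by
  intro a b hab
  have hdiff := intervalIntegral.integral_Ioi_sub_Ioi hf.integrableOn hab.le
  have hpos' := intervalIntegral.intervalIntegral_pos_of_pos_on
    (hf.intervalIntegrable (a := a) (b := b)) (fun x _ => hpos x) hab
  linarith

lemma setIntegral_Ioi_mul_integral_lt_of_strictMono {p G : ℝ → ℝ} (hp : ∀ x, 0 < p x)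
    (hp1 : ∫ x, p x = 1) (hG : StrictMono G) (hpG : Integrable fun x => p x * G x) (t : ℝ) :
    (∫ x in Ioi t, p x) * ∫ x, p x * G x < ∫ x in Ioi t, p x * G x := by
  have hpi : Integrable p := .of_integral_ne_zero (by rw [hp1]; exact one_ne_zero)
  have hmass : (∫ x in Ioi t, p x) + ∫ x in Iic t, p x = 1 := by
    rw [← compl_Ioi, integral_add_compl measurableSet_Ioi hpi, hp1]
  have hsplit : (∫ x in Ioi t, p x * G x) + ∫ x in Iic t, p x * G x = ∫ x, p x * G x := by
    rw [← compl_Ioi, integral_add_compl measurableSet_Ioi hpG]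
  have hleft : 0 < ∫ x in Iic t, p x :=
    setIntegral_pos_of_forall_pos measurableSet_Iic (by simp) hpi.integrableOn fun x _ => hp x
  have hright : G t * ∫ x in Ioi t, p x < ∫ x in Ioi t, p x * G x := by
    have hgap : 0 < ∫ x in Ioi t, (p x * G x - G t * p x) :=
      setIntegral_pos_of_forall_pos measurableSet_Ioi (by simp)
        (hpG.integrableOn.sub (hpi.integrableOn.const_mul _))
        fun x hx => by nlinarith [hp x, hG (mem_Ioi.1 hx)]
    rwa [integral_sub hpG.integrableOn (hpi.integrableOn.const_mul _), integral_const_mul,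
      sub_pos] at hgap
  have hbelow : ∫ x in Iic t, p x * G x ≤ G t * ∫ x in Iic t, p x := by
    rw [← integral_const_mul]
    exact setIntegral_mono_on hpG.integrableOn (hpi.integrableOn.const_mul _) measurableSet_Iic
      fun x hx => by nlinarith [hp x, hG.monotone (mem_Iic.1 hx)]
  have hIoi_nonneg : 0 ≤ ∫ x in Ioi t, p x :=
    setIntegral_nonneg measurableSet_Ioi fun x _ => (hp x).le
  rw [← hsplit]
  linear_combination (∫ x in Ioi t, p x * G x) * hmass + mul_lt_mul_of_pos_left hright hleft
    + mul_le_mul_of_nonneg_left hbelow hIoi_nonneg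

section Sign

variable {X : Type*} [MeasurableSpace X] {μ : Measure X} {f : X → ℝ}

lemma sign_mul_ae_eq (hf0 : ∀ᵐ x ∂μ, f x ≠ 0) (h : X → ℝ) :
    (fun x => sign (f x) * h x) =ᵐ[μ] fun x => 2 * {x | 0 < f x}.indicator h x - h x := by
  filter_upwards [hf0] with x hx
  rcases hx.lt_or_gt with hneg | hpos
  · simp [sign_of_neg hneg, indicator_of_notMem (show x ∉ {x | 0 < f x} from hneg.not_gt)]
  · simp [sign_of_pos hpos, indicator_of_mem (show x ∈ {x | 0 < f x} from hpos)]; ring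

lemma integral_sign_mul (hf : Measurable f) (hf0 : ∀ᵐ x ∂μ, f x ≠ 0) {h : X → ℝ}
    (hh : Integrable h μ) :
    ∫ x, sign (f x) * h x ∂μ = 2 * (∫ x in {x | 0 < f x}, h x ∂μ) - ∫ x, h x ∂μ := by
  have hS : MeasurableSet {x | 0 < f x} := measurableSet_lt measurable_const hf
  rw [integral_congr_ae (sign_mul_ae_eq hf0 h),
    integral_sub ((hh.indicator hS).const_mul 2) hh, integral_const_mul, integral_indicator hS]

lemma integrable_sign_mul (hf : Measurable f) (hf0 : ∀ᵐ x ∂μ, f x ≠ 0) {h : X → ℝ}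
    (hh : Integrable h μ) : Integrable (fun x => sign (f x) * h x) μ :=
  (((hh.indicator (measurableSet_lt measurable_const hf)).const_mul 2).sub hh).congr
    (sign_mul_ae_eq hf0 h).symm

end Sign

lemma integral_sign_mul_sign_sub_mul {g : ℝ × ℝ → ℝ} (hg : Integrable g) (hg1 : ∫ q, g q = 1) :
    (∫ q, sign q.1 * sign q.2 * g q) - (∫ q, sign q.1 * g q) * (∫ q, sign q.2 * g q) =
      4 * ((∫ q in {q : ℝ × ℝ | 0 < q.1 ∧ 0 < q.2}, g q) -
        (∫ q in {q : ℝ × ℝ | 0 < q.1}, g q) * ∫ q in {q : ℝ × ℝ | 0 < q.2}, g q) := by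
  have hfst : ∀ᵐ q : ℝ × ℝ, q.1 ≠ 0 := Measure.quasiMeasurePreserving_fst.ae (Measure.ae_ne _ 0)
  have hsnd : ∀ᵐ q : ℝ × ℝ, q.2 ≠ 0 := Measure.quasiMeasurePreserving_snd.ae (Measure.ae_ne _ 0)
  have hsign₁ := integral_sign_mul measurable_fst hfst hg
  have hsign₂ := integral_sign_mul measurable_snd hsnd hg
  have hsign₁₂ : ∫ q, sign q.1 * sign q.2 * g q =
      2 * (2 * (∫ q in {q : ℝ × ℝ | 0 < q.1 ∧ 0 < q.2}, g q) - ∫ q in {q : ℝ × ℝ | 0 < q.1}, g q)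
        - ∫ q, sign q.2 * g q := by
    simp_rw [mul_assoc]
    rw [integral_sign_mul measurable_fst hfst (integrable_sign_mul measurable_snd hsnd hg),
      integral_sign_mul measurable_snd (ae_restrict_of_ae hsnd) hg.integrableOn,
      Measure.restrict_restrict (measurableSet_lt measurable_const measurable_snd),
      Set.ofPred_and, inter_comm]
  rw [hsign₁₂, hsign₁, hsign₂, hg1]
  ring

lemma setIntegral_Ioi_zero_gaussianPDFReal {v : ℝ≥0} (m : ℝ) :
    ∫ y in Ioi 0, gaussianPDFReal m v y = ∫ z in Ioi (-m), gaussianPDFReal 0 v z := by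
  have := (measurePreserving_sub_right volume m).setIntegral_preimage_emb
    (measurableEmbedding_subRight m) (gaussianPDFReal 0 v) (Ioi (-m))
  simpa [preimage_sub_const_Ioi, gaussianPDFReal_sub] using this

lemma strictMono_setIntegral_Ioi_zero_gaussianPDFReal {v : ℝ≥0} (hv : v ≠ 0) :
    StrictMono fun m => ∫ y in Ioi 0, gaussianPDFReal m v y := by
  simp_rw [setIntegral_Ioi_zero_gaussianPDFReal]
  exact (strictAnti_setIntegral_Ioi (integrable_gaussianPDFReal 0 v)
    fun z => gaussianPDFReal_pos 0 v z hv).comp fun _ _ => neg_lt_neg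

noncomputable def gauss2CondMean (μX μY σX σY ρ x : ℝ) : ℝ := μY + ρ * σY / σX * (x - μX)

noncomputable def gauss2CondVar (σY ρ : ℝ) : ℝ≥0 := (σY ^ 2 * (1 - ρ ^ 2)).toNNReal

noncomputable def gauss2CondProbPos (μX μY σX σY ρ x : ℝ) : ℝ :=
  ∫ y in Ioi 0, gaussianPDFReal (gauss2CondMean μX μY σX σY ρ x) (gauss2CondVar σY ρ) y

section Bivariate

variable {μX μY σX σY ρ : ℝ}

lemma gauss2CondVar_ne_zero (hY : 0 < σY) (hρ : ρ ^ 2 < 1) : gauss2CondVar σY ρ ≠ 0 :=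
  (toNNReal_pos.2 (mul_pos (pow_pos hY 2) (sub_pos.2 hρ))).ne'

lemma strictMono_gauss2CondMean (hX : 0 < σX) (hY : 0 < σY) (hρ0 : 0 < ρ) :
    StrictMono (gauss2CondMean μX μY σX σY ρ) := fun _ _ h => by
  unfold gauss2CondMean
  gcongr

lemma strictMono_gauss2CondProbPos (hX : 0 < σX) (hY : 0 < σY) (hρ0 : 0 < ρ) (hρ : ρ ^ 2 < 1) :
    StrictMono (gauss2CondProbPos μX μY σX σY ρ) :=
  (strictMono_setIntegral_Ioi_zero_gaussianPDFReal (gauss2CondVar_ne_zero hY hρ)).comp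
    (strictMono_gauss2CondMean hX hY hρ0)

lemma integrable_gaussianPDFReal_mul_gauss2CondProbPos (hX : 0 < σX) (hY : 0 < σY)
    (hρ0 : 0 < ρ) (hρ : ρ ^ 2 < 1) (v : ℝ≥0) :
    Integrable fun x => gaussianPDFReal μX v x * gauss2CondProbPos μX μY σX σY ρ x := by
  refine (Integrable.bdd_mul (c := 1) (integrable_gaussianPDFReal _ _)
    (strictMono_gauss2CondProbPos hX hY hρ0 hρ).monotone.measurable.aestronglyMeasurable
    (ae_of_all _ fun x => ?_)).congr (ae_of_all _ fun x => mul_comm _ _)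
  rw [gauss2CondProbPos,
    norm_of_nonneg (setIntegral_nonneg measurableSet_Ioi fun y _ => gaussianPDFReal_nonneg _ _ y),
    ← integral_gaussianPDFReal_eq_one _ (gauss2CondVar_ne_zero hY hρ)]
  exact setIntegral_le_integral (integrable_gaussianPDFReal _ _)
    (ae_of_all _ (gaussianPDFReal_nonneg _ _))

lemma gauss2_eq_mul (hX : 0 < σX) (hY : 0 < σY) (hρ : ρ ^ 2 < 1) (x y : ℝ) :
    gauss2 μX μY σX σY ρ x y = gaussianPDFReal μX (σX ^ 2).toNNReal x *
      gaussianPDFReal (gauss2CondMean μX μY σX σY ρ x) (gauss2CondVar σY ρ) y := by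
  have hρ' : 0 < 1 - ρ ^ 2 := by linarith
  have h2π : √(2 * π) ^ 2 = 2 * π := sq_sqrt (by positivity)
  have hsX : √(2 * π * σX ^ 2) = √(2 * π) * σX := by
    rw [sqrt_mul (by positivity), sqrt_sq hX.le]
  have hsC : √(2 * π * (σY ^ 2 * (1 - ρ ^ 2))) = √(2 * π) * (σY * √(1 - ρ ^ 2)) := by
    rw [sqrt_mul (by positivity : (0 : ℝ) ≤ 2 * π), sqrt_mul (sq_nonneg σY), sqrt_sq hY.le]
  simp only [gauss2, gaussianPDFReal, gauss2CondMean, gauss2CondVar,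
    coe_toNNReal _ (sq_nonneg σX), coe_toNNReal _ (mul_pos (pow_pos hY 2) hρ').le, hsX, hsC]
  rw [mul_mul_mul_comm, ← exp_add]
  congr 1
  · rw [← mul_inv]
    congr 1
    linear_combination -(σX * σY * √(1 - ρ ^ 2)) * h2π
  · congr 1; field_simp; ring

lemma integrable_gauss2 (hX : 0 < σX) (hY : 0 < σY) (hρ : ρ ^ 2 < 1) :
    Integrable fun q : ℝ × ℝ => gauss2 μX μY σX σY ρ q.1 q.2 := by
  have hcont : Continuous fun q : ℝ × ℝ => gauss2 μX μY σX σY ρ q.1 q.2 := by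
    unfold gauss2; fun_prop
  rw [Measure.volume_eq_prod, integrable_prod_iff hcont.aestronglyMeasurable]
  simp only [gauss2_eq_mul hX hY hρ]
  refine ⟨ae_of_all _ fun x => (integrable_gaussianPDFReal _ _).const_mul _, ?_⟩
  simp only [norm_mul, norm_of_nonneg (gaussianPDFReal_nonneg _ _ _), integral_const_mul,
    integral_gaussianPDFReal_eq_one _ (gauss2CondVar_ne_zero hY hρ), mul_one]
  exact integrable_gaussianPDFReal _ _

lemma setIntegral_prod_gauss2 (hX : 0 < σX) (hY : 0 < σY) (hρ : ρ ^ 2 < 1) (A B : Set ℝ) :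
    ∫ q in A ×ˢ B, gauss2 μX μY σX σY ρ q.1 q.2 =
      ∫ x in A, gaussianPDFReal μX (σX ^ 2).toNNReal x *
        ∫ y in B, gaussianPDFReal (gauss2CondMean μX μY σX σY ρ x) (gauss2CondVar σY ρ) y := by
  rw [Measure.volume_eq_prod, setIntegral_prod _ (integrable_gauss2 hX hY hρ).integrableOn]
  simp only [gauss2_eq_mul hX hY hρ, integral_const_mul]

lemma integral_gauss2 (hX : 0 < σX) (hY : 0 < σY) (hρ : ρ ^ 2 < 1) :
    ∫ q : ℝ × ℝ, gauss2 μX μY σX σY ρ q.1 q.2 = 1 := by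
  simpa [integral_gaussianPDFReal_eq_one _ (gauss2CondVar_ne_zero hY hρ),
    integral_gaussianPDFReal_eq_one _ (toNNReal_pos.2 (pow_pos hX 2)).ne'] using
    setIntegral_prod_gauss2 (μX := μX) (μY := μY) hX hY hρ univ univ

lemma setIntegral_gauss2_fst_pos_mul_snd_pos_lt (hX : 0 < σX) (hY : 0 < σY) (hρ0 : 0 < ρ)
    (hρ : ρ ^ 2 < 1) :
    (∫ p in {p : ℝ × ℝ | 0 < p.1}, gauss2 μX μY σX σY ρ p.1 p.2) *
        (∫ p in {p : ℝ × ℝ | 0 < p.2}, gauss2 μX μY σX σY ρ p.1 p.2) <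
      ∫ p in {p : ℝ × ℝ | 0 < p.1 ∧ 0 < p.2}, gauss2 μX μY σX σY ρ p.1 p.2 := by
  have hvX : (σX ^ 2).toNNReal ≠ 0 := (toNNReal_pos.2 (pow_pos hX 2)).ne'
  have hS₁ : {p : ℝ × ℝ | 0 < p.1} = Ioi 0 ×ˢ univ := by ext; simp
  have hS₂ : {p : ℝ × ℝ | 0 < p.2} = univ ×ˢ Ioi 0 := by ext; simp
  have hS₁₂ : {p : ℝ × ℝ | 0 < p.1 ∧ 0 < p.2} = Ioi 0 ×ˢ Ioi 0 := rfl
  simpa [hS₁, hS₂, hS₁₂, setIntegral_prod_gauss2 hX hY hρ, gauss2CondProbPos,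
    integral_gaussianPDFReal_eq_one _ (gauss2CondVar_ne_zero hY hρ)] using
    setIntegral_Ioi_mul_integral_lt_of_strictMono (fun x => gaussianPDFReal_pos μX _ x hvX)
      (integral_gaussianPDFReal_eq_one _ hvX) (strictMono_gauss2CondProbPos hX hY hρ0 hρ)
      (integrable_gaussianPDFReal_mul_gauss2CondProbPos hX hY hρ0 hρ _) 0

end Bivariate

/-- For a nondegenerate bivariate Gaussian with correlation `ρ > 0` and arbitrary
means, the sign-binarized variables `U = sgn X`, `V = sgn Y` have strictly
positive covariance; equivalently `P(X>0, Y>0) > P(X>0)·P(Y>0)`. -/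
theorem sign_binarization_positive_cov (μX μY σX σY ρ : ℝ)
    (hX : 0 < σX) (hY : 0 < σY) (hρ0 : 0 < ρ) (hρ1 : ρ < 1) :
    0 < (∫ p : ℝ × ℝ, Real.sign p.1 * Real.sign p.2 * gauss2 μX μY σX σY ρ p.1 p.2) -
        (∫ p : ℝ × ℝ, Real.sign p.1 * gauss2 μX μY σX σY ρ p.1 p.2) *
          (∫ p : ℝ × ℝ, Real.sign p.2 * gauss2 μX μY σX σY ρ p.1 p.2) ∧
    (∫ p in {p : ℝ × ℝ | 0 < p.1}, gauss2 μX μY σX σY ρ p.1 p.2) *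
        (∫ p in {p : ℝ × ℝ | 0 < p.2}, gauss2 μX μY σX σY ρ p.1 p.2) <
      ∫ p in {p : ℝ × ℝ | 0 < p.1 ∧ 0 < p.2}, gauss2 μX μY σX σY ρ p.1 p.2 := by
  have hρ : ρ ^ 2 < 1 := by nlinarith
  have hquadrant :=
    setIntegral_gauss2_fst_pos_mul_snd_pos_lt (μX := μX) (μY := μY) hX hY hρ0 hρ
  refine ⟨?_, hquadrant⟩
  rw [integral_sign_mul_sign_sub_mul (integrable_gauss2 hX hY hρ) (integral_gauss2 hX hY hρ)]
  linarith
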